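/- The partial transpose ρ_s^{T_B} of the best separable approximation ρ_s of a Bell decomposable state in the interior of the singlet tetrahedron has rank 3, and its kernel is spanned by the Bell state |φ⁺⟩ = (|00⟩+|11⟩)/√2. -/
import Mathlib


open Matrix

noncomputable section

/-- partial transpose over the second qubit, in the computational basis
|00⟩,|01⟩,|10⟩,|11⟩ (index 2i+j ↔ |ij⟩): each 2×2 block is transposed. -/
def ptB4 (M : Matrix (Fin 4) (Fin 4) ℂ) : Matrix (Fin 4) (Fin 4) ℂ :=
  fun i j => M ⟨2 * (i.val / 2) + j.val % 2, by omega⟩ ⟨2 * (j.val / 2) + i.val % 2, by omega⟩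

/-- the explicit best separable approximation ρ_s of a Bell decomposable state -/
def ρs (t1 t2 t3 : ℝ) : Matrix (Fin 4) (Fin 4) ℂ :=
  ((1 / (2 * (3 + t1 + t2 + t3)) : ℝ) : ℂ) •
    !![((1 + t3 : ℝ) : ℂ), 0, 0, ((t1 - t2 : ℝ) : ℂ);
       0, ((2 + t1 + t2 : ℝ) : ℂ), ((-1 - t3 : ℝ) : ℂ), 0;
       0, ((-1 - t3 : ℝ) : ℂ), ((2 + t1 + t2 : ℝ) : ℂ), 0;
       ((t1 - t2 : ℝ) : ℂ), 0, 0, ((1 + t3 : ℝ) : ℂ)]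

/-- the Bell state |φ⁺⟩ = (|00⟩+|11⟩)/√2 -/
def φplus : Fin 4 → ℂ := ![(Real.sqrt 2)⁻¹, 0, 0, (Real.sqrt 2)⁻¹]

lemma pt_eq (t1 t2 t3 : ℝ) : ptB4 (ρs t1 t2 t3) =
    ((1 / (2 * (3 + t1 + t2 + t3)) : ℝ) : ℂ) •
    !![((1 + t3 : ℝ) : ℂ), 0, 0, -((1 + t3 : ℝ) : ℂ);
       0, ((2 + t1 + t2 : ℝ) : ℂ), ((t1 - t2 : ℝ) : ℂ), 0;
       0, ((t1 - t2 : ℝ) : ℂ), ((2 + t1 + t2 : ℝ) : ℂ), 0;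
       -((1 + t3 : ℝ) : ℂ), 0, 0, ((1 + t3 : ℝ) : ℂ)] := by
  ext i j
  fin_cases i <;> fin_cases j <;> simp [ptB4, ρs, Matrix.smul_apply] <;> push_cast <;> ring_nf <;>
    norm_num

/-- for (t₁,t₂,t₃) strictly inside the singlet tetrahedron, the
partial transpose of the best separable approximation ρ_s has rank 3 and its
kernel is spanned by |φ⁺⟩. -/
theorem bsa_partialTranspose_rank_three (t1 t2 t3 : ℝ)
    (h1 : 0 < 1 + t1 - t2 + t3) (h2 : 0 < 1 - t1 + t2 + t3)
    (h3 : 0 < 1 + t1 + t2 - t3) (h4 : 0 < 1 - t1 - t2 - t3)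
    (hsing : 1 + t1 + t2 + t3 < 0) :
    (ptB4 (ρs t1 t2 t3)).rank = 3 ∧
    (∀ v : Fin 4 → ℂ, (ptB4 (ρs t1 t2 t3)) *ᵥ v = 0 ↔ ∃ c : ℂ, v = c • φplus) := by
  have hs : (0:ℝ) < 3 + t1 + t2 + t3 := by linarith
  have hc : ((1 / (2 * (3 + t1 + t2 + t3)) : ℝ) : ℂ) ≠ 0 := by
    have : (1 / (2 * (3 + t1 + t2 + t3)) : ℝ) ≠ 0 := by positivity
    exact_mod_cast Complex.ofReal_ne_zero.mpr this
  have ha : (1 : ℂ) + (t3 : ℂ) ≠ 0 := by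
    have h : (1 + t3 : ℝ) ≠ 0 := by linarith
    have := Complex.ofReal_ne_zero.mpr h
    push_cast at this; exact this
  have hbd1 : ((2 : ℂ) + t1 + t2) + ((t1 : ℂ) - t2) ≠ 0 := by
    have h : ((2 + t1 + t2) + (t1 - t2) : ℝ) ≠ 0 := by linarith
    have := Complex.ofReal_ne_zero.mpr h
    push_cast at this; exact this
  have hbd2 : ((2 : ℂ) + t1 + t2) - ((t1 : ℂ) - t2) ≠ 0 := by
    have h : ((2 + t1 + t2) - (t1 - t2) : ℝ) ≠ 0 := by linarith
    have := Complex.ofReal_ne_zero.mpr h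
    push_cast at this; exact this
  have hsq : ((Real.sqrt 2 : ℝ) : ℂ) ≠ 0 := by
    have : Real.sqrt 2 ≠ 0 := by positivity
    exact Complex.ofReal_ne_zero.mpr this
  have hker : ∀ v : Fin 4 → ℂ, (ptB4 (ρs t1 t2 t3)) *ᵥ v = 0 ↔ ∃ c : ℂ, v = c • φplus := by
    intro v
    rw [pt_eq, smul_mulVec, smul_eq_zero]
    constructor
    · rintro (h | hv)
      · exact absurd h hc
      · have e0 := congrFun hv 0
        have e1 := congrFun hv 1
        have e2 := congrFun hv 2
        simp [Matrix.mulVec, dotProduct, Fin.sum_univ_four] at e0 e1 e2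
        have hsum : v 1 + v 2 = 0 := by
          rcases mul_eq_zero.mp (show (((2:ℂ) + t1 + t2) + ((t1:ℂ) - t2)) * (v 1 + v 2) = 0 by
            linear_combination e1 + e2) with h | h
          · exact absurd h hbd1
          · exact h
        have hdiff : v 1 - v 2 = 0 := by
          rcases mul_eq_zero.mp (show (((2:ℂ) + t1 + t2) - ((t1:ℂ) - t2)) * (v 1 - v 2) = 0 by
            linear_combination e1 - e2) with h | h
          · exact absurd h hbd2
          · exact h
        have h03 : v 0 = v 3 := by
          rcases mul_eq_zero.mp (show ((1:ℂ) + t3) * (v 0 - v 3) = 0 by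
            linear_combination e0) with h | h
          · exact absurd h ha
          · linear_combination h
        refine ⟨((Real.sqrt 2 : ℝ) : ℂ) * v 0, ?_⟩
        funext i
        fin_cases i <;>
          simp [φplus, Pi.smul_apply, smul_eq_mul]
        · field_simp
        · linear_combination (hsum + hdiff) / 2
        · linear_combination (hsum - hdiff) / 2
        · rw [← h03]; field_simp
    · rintro ⟨c, rfl⟩
      right
      funext i
      fin_cases i <;>
        simp [Matrix.mulVec, dotProduct, Fin.sum_univ_four, φplus, Pi.smul_apply,
          smul_eq_mul] <;> ring
  refine ⟨?_, hker⟩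
  have hφ : φplus ≠ 0 := by
    intro h
    have h0 := congrFun h 0
    simp only [φplus, Matrix.cons_val_zero, Pi.zero_apply, inv_eq_zero] at h0
    exact hsq h0
  have hkerEq : LinearMap.ker (ptB4 (ρs t1 t2 t3)).mulVecLin = Submodule.span ℂ {φplus} := by
    ext v
    rw [LinearMap.mem_ker, Matrix.mulVecLin_apply, hker v, Submodule.mem_span_singleton]
    exact ⟨fun ⟨c, h⟩ => ⟨c, h.symm⟩, fun ⟨c, h⟩ => ⟨c, h.symm⟩⟩
  have hrn := LinearMap.finrank_range_add_finrank_ker (ptB4 (ρs t1 t2 t3)).mulVecLin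
  rw [hkerEq, finrank_span_singleton hφ] at hrn
  have hdom : Module.finrank ℂ (Fin 4 → ℂ) = 4 := by simp
  rw [hdom] at hrn
  rw [Matrix.rank]
  omega


end
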